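/- arXiv:0812.4988 — 2 statements merged into one kernel-verified Lean document; each statement's English description precedes it below -/
import Mathlib

section
/- Let K be a pointed topological space with basepoint *. The assignment sending (x, y, t) ∈ K × K × [0,1] to the point of Σ(K ∨ K) represented by (4t, in₁ x) for t ∈ [0, 1/4], by (4t − 1, in₂ y) for t ∈ [1/4, 1/2], by (3 − 4t, in₁ x) for t ∈ [1/2, 3/4], and by (4 − 4t, in₂ y) for t ∈ [3/4, 1], descends to a well-defined continuous map W̃mod : K ∗ K → Σ(K ∨ K). Moreover W̃mod is ℤ/2-equivariant: if K ∗ K carries the involution [x, y, t] ↦ [y, x, 1 − t] and Σ(K ∨ K) carries the involution induced by the identity on the suspension coordinate and the swap of the two wedge summands (in₁ x ↔ in₂ x), then W̃mod intertwines the two involutions. -/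
open unitInterval

universe u

/-! ### The join, the wedge and the reduced suspension, as quotient spaces -/

/-- The relation on `K × K × [0,1]` generating the join `K ∗ K`:
`(x, y, 0) ∼ (x', y, 0)` and `(x, y, 1) ∼ (x, y', 1)`. -/
def joinRel (K : Type u) : K × K × I → K × K × I → Prop := fun p q =>
  (p.2.2 = 0 ∧ q.2.2 = 0 ∧ p.2.1 = q.2.1) ∨ (p.2.2 = 1 ∧ q.2.2 = 1 ∧ p.1 = q.1)

/-- The join `K ∗ K`, with the quotient topology. -/
abbrev Join (K : Type u) [TopologicalSpace K] := Quot (joinRel K)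

/-- The class of `(x, y, t)` in the join. -/
def joinMk {K : Type u} [TopologicalSpace K] (x y : K) (t : I) : Join K :=
  Quot.mk _ (x, y, t)

/-- The involution `[x, y, t] ↦ [y, x, 1 - t]` of the join. -/
def joinInv {K : Type u} [TopologicalSpace K] : Join K → Join K :=
  Quot.lift (fun p => joinMk p.2.1 p.1 (σ p.2.2)) <| by
    rintro ⟨x, y, t⟩ ⟨x', y', t'⟩ (⟨h1, h2, h3⟩ | ⟨h1, h2, h3⟩) <;> dsimp only at h1 h2 h3 ⊢
    · subst h1; subst h2; subst h3
      exact Quot.sound (Or.inr ⟨by simp, by simp, rfl⟩)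
    · subst h1; subst h2; subst h3
      exact Quot.sound (Or.inl ⟨by simp, by simp, rfl⟩)

/-- The relation on `[0,1] × L` generating the reduced suspension `ΣL`: the subset
`({0} × L) ∪ ({1} × L) ∪ ([0,1] × {l₀})` is collapsed to a point. -/
def suspRel {L : Type u} (l₀ : L) : I × L → I × L → Prop := fun p q =>
  (p.1 = 0 ∨ p.1 = 1 ∨ p.2 = l₀) ∧ (q.1 = 0 ∨ q.1 = 1 ∨ q.2 = l₀)

/-- The reduced suspension `ΣL` of the pointed space `(L, l₀)`. -/
abbrev Susp (L : Type u) [TopologicalSpace L] (l₀ : L) := Quot (suspRel l₀)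

/-- The class of `(t, z)` in the reduced suspension. -/
def suspMk {L : Type u} [TopologicalSpace L] (l₀ : L) (t : I) (z : L) : Susp L l₀ :=
  Quot.mk _ (t, z)

/-- The point of `ΣL` represented by a real suspension coordinate `t` (clamped to `[0,1]`)
and a point `z` of `L`. -/
noncomputable def suspPtR {L : Type u} [TopologicalSpace L] (l₀ : L) (t : ℝ) (z : L) :
    Susp L l₀ :=
  suspMk l₀ (Set.projIcc (0 : ℝ) 1 zero_le_one t) z

/-- The map `ΣL → ΣL'` induced by a basepoint preserving map `L → L'`,
acting as the identity on the suspension coordinate. -/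
def suspMap {L L' : Type u} [TopologicalSpace L] [TopologicalSpace L']
    (l₀ : L) (l₀' : L') (f : L → L') (hf : f l₀ = l₀') : Susp L l₀ → Susp L' l₀' :=
  Quot.lift (fun p => suspMk l₀' p.1 (f p.2)) <| by
    rintro ⟨t, z⟩ ⟨t', z'⟩ ⟨h, h'⟩
    refine Quot.sound ⟨?_, ?_⟩
    · rcases h with h | h | h
      · exact Or.inl h
      · exact Or.inr (Or.inl h)
      · exact Or.inr (Or.inr (by rw [h, hf]))
    · rcases h' with h | h | h
      · exact Or.inl h
      · exact Or.inr (Or.inl h)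
      · exact Or.inr (Or.inr (by rw [h, hf]))

/-- The relation on `K ⊕ K` generating the wedge `K ∨ K`: the two basepoints are identified. -/
def wedgeRel {K : Type u} (k₀ : K) : K ⊕ K → K ⊕ K → Prop := fun p q =>
  (p = Sum.inl k₀ ∨ p = Sum.inr k₀) ∧ (q = Sum.inl k₀ ∨ q = Sum.inr k₀)

/-- The wedge `K ∨ K` of two copies of the pointed space `(K, k₀)`. -/
abbrev Wedge {K : Type u} [TopologicalSpace K] (k₀ : K) := Quot (wedgeRel k₀)

/-- The inclusion of the first wedge summand. -/
def wIn₁ {K : Type u} [TopologicalSpace K] (k₀ : K) (x : K) : Wedge k₀ :=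
  Quot.mk _ (Sum.inl x)

/-- The inclusion of the second wedge summand. -/
def wIn₂ {K : Type u} [TopologicalSpace K] (k₀ : K) (y : K) : Wedge k₀ :=
  Quot.mk _ (Sum.inr y)

/-- The basepoint of the wedge. -/
def wedgePt {K : Type u} [TopologicalSpace K] (k₀ : K) : Wedge k₀ := wIn₁ k₀ k₀

/-- The swap of the two wedge summands, `in₁ x ↔ in₂ x`. -/
def wedgeSwap {K : Type u} [TopologicalSpace K] (k₀ : K) : Wedge k₀ → Wedge k₀ :=
  Quot.lift (fun p => Quot.mk _ p.swap) <| by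
    rintro p q ⟨hp, hq⟩
    refine Quot.sound ⟨?_, ?_⟩
    · rcases hp with h | h <;> subst h <;> simp [Sum.swap]
    · rcases hq with h | h <;> subst h <;> simp [Sum.swap]

theorem wedgeSwap_pt {K : Type u} [TopologicalSpace K] (k₀ : K) :
    wedgeSwap k₀ (wedgePt k₀) = wedgePt k₀ :=
  Quot.sound ⟨Or.inr rfl, Or.inl rfl⟩

/-- The involution of `Σ(K ∨ K)` which is the identity on the suspension coordinate and
swaps the two wedge summands. -/
def suspWedgeInv {K : Type u} [TopologicalSpace K] (k₀ : K) :
    Susp (Wedge k₀) (wedgePt k₀) → Susp (Wedge k₀) (wedgePt k₀) :=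
  suspMap (wedgePt k₀) (wedgePt k₀) (wedgeSwap k₀) (wedgeSwap_pt k₀)

/-! The map traces, for fixed `x` and `y`, the commutator loop `a · b · a⁻¹ · b⁻¹` of the
suspension loops `a` of `in₁ x` and `b` of `in₂ y`. Consecutive pieces agree at the breakpoints
`1/4, 1/2, 3/4` because there the suspension coordinate is `0` or `1`, and the ends `t = 0, 1`
go to the basepoint, so the formula descends to the join and is continuous by gluing along four
closed slabs. Reversing time turns this loop into `b' · a' · b'⁻¹ · a'⁻¹` with `a'`, `b'` the
loops of `in₁ y`, `in₂ x`, which is the swap of the original loop. -/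

section Suspension

variable {L : Type u} [TopologicalSpace L] (l₀ : L)

lemma suspPtR_of_nonpos {t : ℝ} (ht : t ≤ 0) (z : L) :
    suspPtR l₀ t z = suspPtR l₀ 0 l₀ :=
  Quot.sound ⟨Or.inl (Subtype.ext (by simp [Set.projIcc_of_le_left _ ht])), Or.inr (Or.inr rfl)⟩

lemma suspPtR_of_one_le {t : ℝ} (ht : 1 ≤ t) (z : L) :
    suspPtR l₀ t z = suspPtR l₀ 0 l₀ :=
  Quot.sound ⟨Or.inr (Or.inl (Subtype.ext (by simp [Set.projIcc_of_right_le _ ht]))),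
    Or.inr (Or.inr rfl)⟩

lemma continuous_suspPtR {X : Type*} [TopologicalSpace X] {f : X → ℝ} {g : X → L}
    (hf : Continuous f) (hg : Continuous g) :
    Continuous fun x => suspPtR l₀ (f x) (g x) :=
  continuous_quot_mk.comp ((continuous_projIcc.comp hf).prodMk hg)

lemma suspMap_suspPtR {L' : Type u} [TopologicalSpace L'] (l₀' : L') (f : L → L')
    (hf : f l₀ = l₀') (t : ℝ) (z : L) :
    suspMap l₀ l₀' f hf (suspPtR l₀ t z) = suspPtR l₀' t (f z) :=
  rfl

end Suspension

section Wedge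

variable {K : Type u} [TopologicalSpace K] (k₀ : K)

lemma continuous_wIn₁ : Continuous (wIn₁ k₀) := continuous_quot_mk.comp continuous_inl

lemma continuous_wIn₂ : Continuous (wIn₂ k₀) := continuous_quot_mk.comp continuous_inr

lemma wedgeSwap_wIn₁ (x : K) : wedgeSwap k₀ (wIn₁ k₀ x) = wIn₂ k₀ x := rfl

lemma wedgeSwap_wIn₂ (x : K) : wedgeSwap k₀ (wIn₂ k₀ x) = wIn₁ k₀ x := rfl

end Wedge

section WhiteheadMap

variable {K : Type u} [TopologicalSpace K] (k₀ : K)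

open Classical in
noncomputable def whiteheadFun (p : K × K × I) : Susp (Wedge k₀) (wedgePt k₀) :=
  if (p.2.2 : ℝ) ≤ 1 / 4 then suspPtR (wedgePt k₀) (4 * p.2.2) (wIn₁ k₀ p.1)
  else if (p.2.2 : ℝ) ≤ 1 / 2 then suspPtR (wedgePt k₀) (4 * p.2.2 - 1) (wIn₂ k₀ p.2.1)
  else if (p.2.2 : ℝ) ≤ 3 / 4 then suspPtR (wedgePt k₀) (3 - 4 * p.2.2) (wIn₁ k₀ p.1)
  else suspPtR (wedgePt k₀) (4 - 4 * p.2.2) (wIn₂ k₀ p.2.1)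

variable {k₀} (x y : K) {t : I}

lemma whiteheadFun_of_le_quarter (ht : (t : ℝ) ≤ 1 / 4) :
    whiteheadFun k₀ (x, y, t) = suspPtR (wedgePt k₀) (4 * t) (wIn₁ k₀ x) := by
  simp only [whiteheadFun, if_pos ht]

lemma whiteheadFun_of_quarter_le_of_le_half (h₁ : 1 / 4 ≤ (t : ℝ)) (h₂ : (t : ℝ) ≤ 1 / 2) :
    whiteheadFun k₀ (x, y, t) = suspPtR (wedgePt k₀) (4 * t - 1) (wIn₂ k₀ y) := by
  by_cases h : (t : ℝ) ≤ 1 / 4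
  · rw [whiteheadFun_of_le_quarter x y h, suspPtR_of_one_le _ (by linarith : (1 : ℝ) ≤ 4 * t),
      suspPtR_of_nonpos _ (by linarith : 4 * (t : ℝ) - 1 ≤ 0)]
  · simp only [whiteheadFun, if_neg h, if_pos h₂]

lemma whiteheadFun_of_half_le_of_le_three_quarters (h₁ : 1 / 2 ≤ (t : ℝ))
    (h₂ : (t : ℝ) ≤ 3 / 4) :
    whiteheadFun k₀ (x, y, t) = suspPtR (wedgePt k₀) (3 - 4 * t) (wIn₁ k₀ x) := by
  by_cases h : (t : ℝ) ≤ 1 / 2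
  · rw [whiteheadFun_of_quarter_le_of_le_half x y (by linarith) h,
      suspPtR_of_one_le _ (by linarith : (1 : ℝ) ≤ 4 * t - 1),
      suspPtR_of_one_le _ (by linarith : (1 : ℝ) ≤ 3 - 4 * t)]
  · simp only [whiteheadFun, if_neg (by linarith : ¬(t : ℝ) ≤ 1 / 4), if_neg h, if_pos h₂]

lemma whiteheadFun_of_three_quarters_le (h₁ : 3 / 4 ≤ (t : ℝ)) :
    whiteheadFun k₀ (x, y, t) = suspPtR (wedgePt k₀) (4 - 4 * t) (wIn₂ k₀ y) := by
  by_cases h : (t : ℝ) ≤ 3 / 4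
  · rw [whiteheadFun_of_half_le_of_le_three_quarters x y (by linarith) h,
      suspPtR_of_nonpos _ (by linarith : 3 - 4 * (t : ℝ) ≤ 0),
      suspPtR_of_one_le _ (by linarith : (1 : ℝ) ≤ 4 - 4 * t)]
  · simp only [whiteheadFun, if_neg (by linarith : ¬(t : ℝ) ≤ 1 / 4),
      if_neg (by linarith : ¬(t : ℝ) ≤ 1 / 2), if_neg h]

lemma whiteheadFun_zero : whiteheadFun k₀ (x, y, 0) = suspPtR (wedgePt k₀) 0 (wedgePt k₀) := by
  rw [whiteheadFun_of_le_quarter x y (by norm_num), suspPtR_of_nonpos _ (by simp)]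

lemma whiteheadFun_one : whiteheadFun k₀ (x, y, 1) = suspPtR (wedgePt k₀) 0 (wedgePt k₀) := by
  rw [whiteheadFun_of_three_quarters_le x y (by norm_num), suspPtR_of_nonpos _ (by simp)]

variable (k₀) in
lemma whiteheadFun_eq_of_joinRel {p q : K × K × I} (h : joinRel K p q) :
    whiteheadFun k₀ p = whiteheadFun k₀ q := by
  obtain ⟨x, y, t⟩ := p
  obtain ⟨x', y', t'⟩ := q
  rcases h with ⟨rfl, rfl, -⟩ | ⟨rfl, rfl, -⟩
  · rw [whiteheadFun_zero, whiteheadFun_zero]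
  · rw [whiteheadFun_one, whiteheadFun_one]

variable (k₀) in
lemma continuous_whiteheadFun : Continuous (whiteheadFun k₀ : K × K × I → _) := by
  set τ : K × K × I → ℝ := fun p => p.2.2
  have hτ : Continuous τ := by fun_prop
  have piece (f : K × K × I → ℝ) {g : K × K × I → Wedge k₀} (hf : Continuous f)
      (hg : Continuous g) {s : Set ℝ}
      (hfg : ∀ p ∈ τ ⁻¹' s, whiteheadFun k₀ p = suspPtR (wedgePt k₀) (f p) (g p)) :
      ContinuousOn (whiteheadFun k₀) (τ ⁻¹' s) :=
    (continuous_suspPtR _ hf hg).continuousOn.congr hfg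
  have hin₁ : Continuous fun p : K × K × I => wIn₁ k₀ p.1 :=
    (continuous_wIn₁ k₀).comp continuous_fst
  have hin₂ : Continuous fun p : K × K × I => wIn₂ k₀ p.2.1 :=
    (continuous_wIn₂ k₀).comp (by fun_prop)
  have h₁ : ContinuousOn (whiteheadFun k₀) (τ ⁻¹' Set.Iic (1 / 4)) :=
    piece (fun p => 4 * (p.2.2 : ℝ)) (by fun_prop) hin₁ fun ⟨x, y, _⟩ ht =>
      whiteheadFun_of_le_quarter x y ht
  have h₂ : ContinuousOn (whiteheadFun k₀) (τ ⁻¹' Set.Icc (1 / 4) (1 / 2)) :=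
    piece (fun p => 4 * (p.2.2 : ℝ) - 1) (by fun_prop) hin₂ fun ⟨x, y, _⟩ ht =>
      whiteheadFun_of_quarter_le_of_le_half x y ht.1 ht.2
  have h₃ : ContinuousOn (whiteheadFun k₀) (τ ⁻¹' Set.Icc (1 / 2) (3 / 4)) :=
    piece (fun p => 3 - 4 * (p.2.2 : ℝ)) (by fun_prop) hin₁ fun ⟨x, y, _⟩ ht =>
      whiteheadFun_of_half_le_of_le_three_quarters x y ht.1 ht.2
  have h₄ : ContinuousOn (whiteheadFun k₀) (τ ⁻¹' Set.Ici (3 / 4)) :=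
    piece (fun p => 4 - 4 * (p.2.2 : ℝ)) (by fun_prop) hin₂ fun ⟨x, y, _⟩ ht =>
      whiteheadFun_of_three_quarters_le x y ht
  have hclosed {s : Set ℝ} (hs : IsClosed s) : IsClosed (τ ⁻¹' s) := hs.preimage hτ
  have hleft : ContinuousOn (whiteheadFun k₀) (τ ⁻¹' Set.Iic (1 / 2)) := by
    rw [← Set.Iic_union_Icc_eq_Iic (by norm_num : (1 / 4 : ℝ) ≤ 1 / 2), Set.preimage_union]
    exact h₁.union_of_isClosed h₂ (hclosed isClosed_Iic) (hclosed isClosed_Icc)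
  have hright : ContinuousOn (whiteheadFun k₀) (τ ⁻¹' Set.Ici (1 / 2)) := by
    rw [← Set.Icc_union_Ici_eq_Ici (by norm_num : (1 / 2 : ℝ) ≤ 3 / 4), Set.preimage_union]
    exact h₃.union_of_isClosed h₄ (hclosed isClosed_Icc) (hclosed isClosed_Ici)
  rw [← continuousOn_univ, ← Set.preimage_univ, ← Set.Iic_union_Ici (a := (1 / 2 : ℝ)),
    Set.preimage_union]
  exact hleft.union_of_isClosed hright (hclosed isClosed_Iic) (hclosed isClosed_Ici)

lemma whiteheadFun_swap (t : I) :
    whiteheadFun k₀ (y, x, σ t) = suspWedgeInv k₀ (whiteheadFun k₀ (x, y, t)) := by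
  have hσ : (σ t : ℝ) = 1 - t := coe_symm_eq t
  simp only [suspWedgeInv]
  rcases le_total (t : ℝ) (1 / 4) with h₁ | h₁
  · rw [whiteheadFun_of_le_quarter x y h₁, whiteheadFun_of_three_quarters_le y x (by linarith),
      suspMap_suspPtR, wedgeSwap_wIn₁, hσ]
    congr 1; ring
  rcases le_total (t : ℝ) (1 / 2) with h₂ | h₂
  · rw [whiteheadFun_of_quarter_le_of_le_half x y h₁ h₂,
      whiteheadFun_of_half_le_of_le_three_quarters y x (by linarith) (by linarith),
      suspMap_suspPtR, wedgeSwap_wIn₂, hσ]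
    congr 1; ring
  rcases le_total (t : ℝ) (3 / 4) with h₃ | h₃
  · rw [whiteheadFun_of_half_le_of_le_three_quarters x y h₂ h₃,
      whiteheadFun_of_quarter_le_of_le_half y x (by linarith) (by linarith),
      suspMap_suspPtR, wedgeSwap_wIn₁, hσ]
    congr 1; ring
  · rw [whiteheadFun_of_three_quarters_le x y h₃, whiteheadFun_of_le_quarter y x (by linarith),
      suspMap_suspPtR, wedgeSwap_wIn₂, hσ]
    congr 1; ring

end WhiteheadMap

/-- The piecewise formula `(x, y, t) ↦ (4t, in₁ x)` for `t ∈ [0, 1/4]`,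
`(4t − 1, in₂ y)` for `t ∈ [1/4, 1/2]`, `(3 − 4t, in₁ x)` for `t ∈ [1/2, 3/4]`, and
`(4 − 4t, in₂ y)` for `t ∈ [3/4, 1]`, descends to a well-defined continuous map
`W̃mod : K ∗ K → Σ(K ∨ K)`, and this map is `ℤ/2`-equivariant with respect to the involution
`[x, y, t] ↦ [y, x, 1 − t]` of the join and the involution of `Σ(K ∨ K)` which is the identity
on the suspension coordinate and swaps the two wedge summands. -/
theorem exists_equivariant_whitehead_wedge_map
    (K : Type u) [TopologicalSpace K] (k₀ : K) :
    ∃ Wmod : C(Join K, Susp (Wedge k₀) (wedgePt k₀)),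
      (∀ (x y : K) (t : I), (t : ℝ) ≤ 1 / 4 →
        Wmod (joinMk x y t) = suspPtR (wedgePt k₀) (4 * t) (wIn₁ k₀ x)) ∧
      (∀ (x y : K) (t : I), 1 / 4 ≤ (t : ℝ) → (t : ℝ) ≤ 1 / 2 →
        Wmod (joinMk x y t) = suspPtR (wedgePt k₀) (4 * t - 1) (wIn₂ k₀ y)) ∧
      (∀ (x y : K) (t : I), 1 / 2 ≤ (t : ℝ) → (t : ℝ) ≤ 3 / 4 →
        Wmod (joinMk x y t) = suspPtR (wedgePt k₀) (3 - 4 * t) (wIn₁ k₀ x)) ∧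
      (∀ (x y : K) (t : I), 3 / 4 ≤ (t : ℝ) →
        Wmod (joinMk x y t) = suspPtR (wedgePt k₀) (4 - 4 * t) (wIn₂ k₀ y)) ∧
      (∀ p : Join K, Wmod (joinInv p) = suspWedgeInv k₀ (Wmod p)) :=
  ⟨⟨Quot.lift (whiteheadFun k₀) (fun _ _ => whiteheadFun_eq_of_joinRel k₀),
      continuous_quot_lift _ (continuous_whiteheadFun k₀)⟩,
    fun x y _ => whiteheadFun_of_le_quarter x y,
    fun x y _ => whiteheadFun_of_quarter_le_of_le_half x y,
    fun x y _ => whiteheadFun_of_half_le_of_le_three_quarters x y,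
    fun x y _ => whiteheadFun_of_three_quarters_le x y,
    Quot.ind fun ⟨x, y, t⟩ => whiteheadFun_swap x y t⟩
end

section
/- Let ℓ ≥ 2 and set j = 2^{φ(ℓ−1)}, where φ is the Adams number function. Then there is a homeomorphism Φ : S(ℓα) ×_{ℤ/2} S^{jα} → ℝP^{ℓ−1} × S^j over ℝP^{ℓ−1} (i.e., commuting with the projections to ℝP^{ℓ−1}, where the projection of the source is induced by (s, v) ↦ [s]) which preserves the distinguished sections: there are two fixed antipodal points n, s ∈ S^j such that Φ carries the class of (s, 0) to ([s], n) and the class of (s, ∞) to ([s], s) for every s ∈ S(ℓα). -/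
/-- The Adams number `φ(ℓ)`: the number of integers `n` with `1 ≤ n ≤ ℓ` and
`n ≡ 0, 1, 2, 4 (mod 8)`. -/
def adamsPhi (ℓ : ℕ) : ℕ :=
  ((Finset.Icc 1 ℓ).filter fun n => n % 8 = 0 ∨ n % 8 = 1 ∨ n % 8 = 2 ∨ n % 8 = 4).card

open OnePoint

/-- Euclidean `n`-space. -/
abbrev Euc (n : ℕ) := EuclideanSpace ℝ (Fin n)

/-- The unit sphere `S^{n-1} ⊆ ℝ^n`. -/
abbrev Sph (n : ℕ) := Metric.sphere (0 : Euc n) 1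

/-- A distinguished point (the first standard basis vector) on the unit sphere of `ℝ^n`. -/
noncomputable def sphPt (n : ℕ) (h : 0 < n) : Sph n :=
  ⟨EuclideanSpace.single (⟨0, h⟩ : Fin n) (1 : ℝ), by
    simp [mem_sphere_iff_norm, EuclideanSpace.norm_single]⟩

/-- The antipodal relation on the unit sphere of `ℝ^n`. -/
def antipRel (n : ℕ) : Sph n → Sph n → Prop := fun s t => (t : Euc n) = -(s : Euc n)

/-- Real projective space `ℝP^{n-1}`, as the quotient of the unit sphere `S^{n-1} ⊆ ℝ^n`
by the antipodal map. -/
abbrev RealProj (n : ℕ) := Quot (antipRel n)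

/-- The class of a unit vector in `ℝP^{n-1}`. -/
def projMk {n : ℕ} (s : Sph n) : RealProj n := Quot.mk _ s

/-- `x ∈ ℝ^n` lies in the subspace spanned by the first `j` coordinates. -/
def inFirstCoords (j : ℕ) {n : ℕ} (x : Euc n) : Prop := ∀ i : Fin n, j ≤ (i : ℕ) → x i = 0

/-- The relation collapsing the copy of `ℝP^{j-1}` (spanned by the first `j` coordinates)
inside `ℝP^{n-1}` to a point. -/
def stuntedRel (n j : ℕ) : RealProj n → RealProj n → Prop := fun p q =>
  (∃ s : Sph n, p = projMk s ∧ inFirstCoords j (s : Euc n)) ∧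
  (∃ s : Sph n, q = projMk s ∧ inFirstCoords j (s : Euc n))

/-- The stunted projective space `ℝP^{n-1}/ℝP^{j-1}`. -/
abbrev Stunted (n j : ℕ) := Quot (stuntedRel n j)

/-- The basepoint of the stunted projective space. -/
noncomputable def stuntedPt (n j : ℕ) (h : 0 < n) : Stunted n j := Quot.mk _ (projMk (sphPt n h))

/-- The involution of the one-point compactification `S^{jα}` of `ℝ^j`
induced by `v ↦ -v`, fixing the point at infinity. -/
def opNeg (j : ℕ) : OnePoint (Euc j) → OnePoint (Euc j) := OnePoint.map fun v => -v

/-- The quotient of `S(nα) × B` identifying `(s, b) ∼ (−s, σ b)` and collapsing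
`S(nα) × {b₀}` to a point; for `B = K ∧ K` this is `S(nα)₊ ∧_{ℤ/2} (K ∧ K)`. -/
def borelSmashRel (n : ℕ) {B : Type*} (b₀ : B) (inv : B → B) :
    Sph n × B → Sph n × B → Prop := fun p q =>
  (p.2 = b₀ ∧ q.2 = b₀) ∨ ((q.1 : Euc n) = -(p.1 : Euc n) ∧ q.2 = inv p.2)

/-- The relation on `S(nα) × B` identifying `(s, b) ∼ (−s, inv b)`; its quotient is the
balanced product `S(nα) ×_{ℤ/2} B`. -/
def borelProdRel (n : ℕ) {B : Type*} (inv : B → B) :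
    Sph n × B → Sph n × B → Prop := fun p q =>
  (q.1 : Euc n) = -(p.1 : Euc n) ∧ q.2 = inv p.2

/-- The balanced product `S(nα) ×_{ℤ/2} B` of the antipodal sphere with a `ℤ/2`-space. -/
abbrev BorelProd (n : ℕ) {B : Type*} [TopologicalSpace B] (inv : B → B) :=
  Quot (borelProdRel n inv)


/-!
There are `m = ℓ - 1` skew-symmetric real `j × j` matrices `E₁, …, Eₘ` with `Eᵢ² = -1` that
pairwise anticommute (Hurwitz–Radon). For `s ∈ S^{ℓ-1}` the matrix `M(s) = s₀ + ∑ sᵢ Eᵢ` is then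
orthogonal and `M(-s) = -M(s)`, so `(s, v) ↦ ([s], M(s) v)` is compatible with
`(s, v) ∼ (-s, -v)` and trivialises `jξ_ℓ`. Extending each `M(s)` to the one-point
compactification and identifying `S^{jα}` with `S^j` by inverse stereographic projection gives a
continuous bijection from a compact space onto a Hausdorff one, i.e. the homeomorphism `Φ`.

The matrices come from `ℍ` and `𝕆` by Clifford periodicity: doubling a family adds one generator,
and tensoring with the doubled octonion family adds eight generators while multiplying the size
by `16`, which matches `φ(m + 8) = φ(m) + 4`.
-/

open Function Filter Matrix Module Topology
open scoped Kronecker RealInnerProductSpace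

theorem Matrix.neg_kronecker {α l m n p : Type*} [Ring α] (A : Matrix l m α) (B : Matrix n p α) :
    (-A) ⊗ₖ B = -(A ⊗ₖ B) := by
  ext; simp [kroneckerMap_apply]

theorem Matrix.kronecker_neg {α l m n p : Type*} [Ring α] (A : Matrix l m α) (B : Matrix n p α) :
    A ⊗ₖ (-B) = -(A ⊗ₖ B) := by
  ext; simp [kroneckerMap_apply]

structure CliffordFamily (R : Type*) [CommRing R] (m : ℕ) (n : Type*) [Fintype n]
    [DecidableEq n] where
  E : Fin m → Matrix n n R
  mul_self : ∀ i, E i * E i = -1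
  transpose : ∀ i, (E i)ᵀ = -E i
  anticomm : ∀ i k, i ≠ k → E i * E k = -(E k * E i)

structure GradedCliffordFamily (R : Type*) [CommRing R] (m : ℕ) (n : Type*) [Fintype n]
    [DecidableEq n] extends CliffordFamily R m n where
  P : Matrix n n R
  transpose_P : Pᵀ = P
  P_mul_self : P * P = 1
  P_anticomm : ∀ i, P * E i = -(E i * P)

namespace CliffordFamily

variable {R : Type*} [CommRing R] {m m' : ℕ} {n p : Type*} [Fintype n] [DecidableEq n]
  [Fintype p] [DecidableEq p]

def empty : CliffordFamily R 0 n where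
  E := Fin.elim0
  mul_self i := i.elim0
  transpose i := i.elim0
  anticomm i := i.elim0

def double (c : CliffordFamily R m n) : GradedCliffordFamily R (m + 1) (n ⊕ n) where
  E := Fin.snoc (fun i => fromBlocks (c.E i) 0 0 (-c.E i)) (fromBlocks 0 (-1) 1 0)
  mul_self i := by
    refine Fin.lastCases ?_ (fun i => ?_) i <;>
      simp [fromBlocks_multiply, c.mul_self, fromBlocks_neg, ← fromBlocks_one]
  transpose i := by
    refine Fin.lastCases ?_ (fun i => ?_) i <;>
      simp [fromBlocks_transpose, c.transpose, fromBlocks_neg]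
  anticomm i k := by
    refine Fin.lastCases ?_ (fun i => ?_) i <;> refine Fin.lastCases ?_ (fun k => ?_) k <;>
      intro hik
    · exact absurd rfl hik
    · simp [fromBlocks_multiply, fromBlocks_neg]
    · simp [fromBlocks_multiply, fromBlocks_neg]
    · simp [fromBlocks_multiply, fromBlocks_neg, c.anticomm i k fun h => hik (congrArg _ h)]
  P := fromBlocks 0 1 1 0
  transpose_P := by simp [fromBlocks_transpose]
  P_mul_self := by simp [fromBlocks_multiply, ← fromBlocks_one]
  P_anticomm i := by
    refine Fin.lastCases ?_ (fun i => ?_) i <;> simp [fromBlocks_multiply, fromBlocks_neg]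

def tensor (c : CliffordFamily R m n) (d : GradedCliffordFamily R m' p) :
    CliffordFamily R (m + m') (n × p) where
  E := Fin.addCases (fun i => c.E i ⊗ₖ d.P) (fun i => (1 : Matrix n n R) ⊗ₖ d.E i)
  mul_self i := by
    refine Fin.addCases (fun i => ?_) (fun i => ?_) i <;>
      simp only [Fin.addCases_left, Fin.addCases_right, ← mul_kronecker_mul, c.mul_self,
        d.mul_self, d.P_mul_self, one_mul, neg_kronecker, kronecker_neg, one_kronecker_one]
  transpose i := by
    refine Fin.addCases (fun i => ?_) (fun i => ?_) i <;>
      simp only [Fin.addCases_left, Fin.addCases_right, ← kroneckerMap_transpose, c.transpose,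
        d.transpose, d.transpose_P, transpose_one, neg_kronecker, kronecker_neg]
  anticomm i k := by
    refine Fin.addCases (fun i => ?_) (fun i => ?_) i <;>
      refine Fin.addCases (fun k => ?_) (fun k => ?_) k <;> intro hik
    · simp only [Fin.addCases_left, ← mul_kronecker_mul, d.P_mul_self,
        c.anticomm i k fun h => hik (congrArg _ h), neg_kronecker]
    · simp only [Fin.addCases_left, Fin.addCases_right, ← mul_kronecker_mul,
        one_mul, mul_one, d.P_anticomm, kronecker_neg]
    · simp only [Fin.addCases_left, Fin.addCases_right, ← mul_kronecker_mul,
        one_mul, mul_one, d.P_anticomm, kronecker_neg, neg_neg]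
    · simp only [Fin.addCases_right, ← mul_kronecker_mul, one_mul,
        d.anticomm i k fun h => hik (congrArg _ h), kronecker_neg]

def mapMatrix {S : Type*} [CommRing S] (c : CliffordFamily R m n)
    (φ : Matrix n n R →+* Matrix p p S) (hφ : ∀ A, φ Aᵀ = (φ A)ᵀ) : CliffordFamily S m p where
  E i := φ (c.E i)
  mul_self i := by rw [← map_mul, c.mul_self, map_neg, map_one]
  transpose i := by rw [← hφ, c.transpose, map_neg]
  anticomm i k hik := by rw [← map_mul, ← map_mul, c.anticomm i k hik, map_neg]

def restrict (c : CliffordFamily R m' n) (h : m ≤ m') : CliffordFamily R m n where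
  E i := c.E (Fin.castLE h i)
  mul_self _ := c.mul_self _
  transpose _ := c.transpose _
  anticomm _ _ hik := c.anticomm _ _ fun h' => hik (Fin.castLE_injective h h')

def map {S : Type*} [CommRing S] (c : CliffordFamily R m n) (f : R →+* S) :
    CliffordFamily S m n :=
  c.mapMatrix f.mapMatrix fun _ => transpose_map.symm

def reindex (c : CliffordFamily R m n) (e : n ≃ p) : CliffordFamily R m p :=
  c.mapMatrix (reindexRingEquiv R e).toRingHom fun A => (transpose_reindex e e A).symm

end CliffordFamily

-- Left multiplication by `i`, `j`, `k` on `ℍ`, in the basis `1, i, j, k`.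
def quaternionFamily : CliffordFamily ℤ 3 (Fin 4) where
  E := ![
    !![ 0, -1,  0,  0;
        1,  0,  0,  0;
        0,  0,  0, -1;
        0,  0,  1,  0],
    !![ 0,  0, -1,  0;
        0,  0,  0,  1;
        1,  0,  0,  0;
        0, -1,  0,  0],
    !![ 0,  0,  0, -1;
        0,  0, -1,  0;
        0,  1,  0,  0;
        1,  0,  0,  0]]
  mul_self := by decide
  transpose := by decide
  anticomm := by decide

-- Left multiplication by the imaginary units of `𝕆 = ℍ ⊕ ℍ`, in the Cayley–Dickson basis.
def octonionFamily : CliffordFamily ℤ 7 (Fin 8) where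
  E := ![
    !![ 0, -1,  0,  0,  0,  0,  0,  0;
        1,  0,  0,  0,  0,  0,  0,  0;
        0,  0,  0, -1,  0,  0,  0,  0;
        0,  0,  1,  0,  0,  0,  0,  0;
        0,  0,  0,  0,  0, -1,  0,  0;
        0,  0,  0,  0,  1,  0,  0,  0;
        0,  0,  0,  0,  0,  0,  0,  1;
        0,  0,  0,  0,  0,  0, -1,  0],
    !![ 0,  0, -1,  0,  0,  0,  0,  0;
        0,  0,  0,  1,  0,  0,  0,  0;
        1,  0,  0,  0,  0,  0,  0,  0;
        0, -1,  0,  0,  0,  0,  0,  0;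
        0,  0,  0,  0,  0,  0, -1,  0;
        0,  0,  0,  0,  0,  0,  0, -1;
        0,  0,  0,  0,  1,  0,  0,  0;
        0,  0,  0,  0,  0,  1,  0,  0],
    !![ 0,  0,  0, -1,  0,  0,  0,  0;
        0,  0, -1,  0,  0,  0,  0,  0;
        0,  1,  0,  0,  0,  0,  0,  0;
        1,  0,  0,  0,  0,  0,  0,  0;
        0,  0,  0,  0,  0,  0,  0, -1;
        0,  0,  0,  0,  0,  0,  1,  0;
        0,  0,  0,  0,  0, -1,  0,  0;
        0,  0,  0,  0,  1,  0,  0,  0],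
    !![ 0,  0,  0,  0, -1,  0,  0,  0;
        0,  0,  0,  0,  0,  1,  0,  0;
        0,  0,  0,  0,  0,  0,  1,  0;
        0,  0,  0,  0,  0,  0,  0,  1;
        1,  0,  0,  0,  0,  0,  0,  0;
        0, -1,  0,  0,  0,  0,  0,  0;
        0,  0, -1,  0,  0,  0,  0,  0;
        0,  0,  0, -1,  0,  0,  0,  0],
    !![ 0,  0,  0,  0,  0, -1,  0,  0;
        0,  0,  0,  0, -1,  0,  0,  0;
        0,  0,  0,  0,  0,  0,  0,  1;
        0,  0,  0,  0,  0,  0, -1,  0;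
        0,  1,  0,  0,  0,  0,  0,  0;
        1,  0,  0,  0,  0,  0,  0,  0;
        0,  0,  0,  1,  0,  0,  0,  0;
        0,  0, -1,  0,  0,  0,  0,  0],
    !![ 0,  0,  0,  0,  0,  0, -1,  0;
        0,  0,  0,  0,  0,  0,  0, -1;
        0,  0,  0,  0, -1,  0,  0,  0;
        0,  0,  0,  0,  0,  1,  0,  0;
        0,  0,  1,  0,  0,  0,  0,  0;
        0,  0,  0, -1,  0,  0,  0,  0;
        1,  0,  0,  0,  0,  0,  0,  0;
        0,  1,  0,  0,  0,  0,  0,  0],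
    !![ 0,  0,  0,  0,  0,  0,  0, -1;
        0,  0,  0,  0,  0,  0,  1,  0;
        0,  0,  0,  0,  0, -1,  0,  0;
        0,  0,  0,  0, -1,  0,  0,  0;
        0,  0,  0,  1,  0,  0,  0,  0;
        0,  0,  1,  0,  0,  0,  0,  0;
        0, -1,  0,  0,  0,  0,  0,  0;
        1,  0,  0,  0,  0,  0,  0,  0]]
  mul_self := by decide
  transpose := by decide
  anticomm := by decide

-- `cliffordGens k + 1` is the Hurwitz–Radon number `ρ(2 ^ k)`.
def cliffordGens : ℕ → ℕ
  | 0 => 0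
  | 1 => 1
  | 2 => 3
  | 3 => 7
  | k + 4 => cliffordGens k + 8

noncomputable def cliffordTower : (k : ℕ) → CliffordFamily ℝ (cliffordGens k) (Fin (2 ^ k))
  | 0 => .empty
  | 1 => CliffordFamily.empty.double.reindex finSumFinEquiv
  | 2 => quaternionFamily.map (Int.castRingHom ℝ)
  | 3 => octonionFamily.map (Int.castRingHom ℝ)
  | k + 4 => ((cliffordTower k).tensor (octonionFamily.map (Int.castRingHom ℝ)).double).reindex
      ((Equiv.prodCongr (.refl _) finSumFinEquiv).trans
        (finProdFinEquiv.trans (finCongr (by ring))))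

theorem adamsPhi_succ (m : ℕ) :
    adamsPhi (m + 1) = adamsPhi m +
      if (m + 1) % 8 = 0 ∨ (m + 1) % 8 = 1 ∨ (m + 1) % 8 = 2 ∨ (m + 1) % 8 = 4 then 1 else 0 := by
  rw [adamsPhi, ← Finset.insert_Icc_right_eq_Icc_add_one (by omega), Finset.filter_insert]
  split_ifs
  · rw [Finset.card_insert_of_notMem (by simp)]
    rfl
  · rfl

theorem adamsPhi_add_eight (m : ℕ) : adamsPhi (m + 8) = adamsPhi m + 4 := by
  induction m with
  | zero => decide
  | succ m ih =>
    rw [show m + 1 + 8 = m + 8 + 1 by ring, adamsPhi_succ, ih, adamsPhi_succ,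
      show (m + 8 + 1) % 8 = (m + 1) % 8 by omega]
    omega

theorem le_cliffordGens_adamsPhi (m : ℕ) : m ≤ cliffordGens (adamsPhi m) := by
  induction m using Nat.strong_induction_on with
  | _ m ih =>
    rcases lt_or_ge m 8 with h | h
    · interval_cases m <;> decide
    · obtain ⟨m, rfl⟩ := Nat.exists_eq_add_of_le' h
      rw [adamsPhi_add_eight]
      exact Nat.add_le_add_right (ih m (by omega)) 8

namespace CliffordFamily

variable {R : Type*} [CommRing R] {m : ℕ} {n : Type*} [Fintype n] [DecidableEq n]

theorem sum_smul_mul_self (c : CliffordFamily R m n) (a : Fin m → R) :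
    (∑ i, a i • c.E i) * (∑ i, a i • c.E i) = -(∑ i, a i ^ 2) • (1 : Matrix n n R) := by
  let f : Fin m × Fin m → Matrix n n R := fun p => (a p.1 * a p.2) • (c.E p.1 * c.E p.2)
  have hdiag : ∑ p ∈ Finset.univ.diag, f p = -(∑ i, a i ^ 2) • 1 := by
    simp [f, Finset.sum_diag, c.mul_self, sq, Finset.sum_smul]
  have hoff : ∑ p ∈ Finset.univ.offDiag, f p = 0 := by
    refine Finset.sum_involution (fun p _ => p.swap) (fun p hp => ?_) (fun p hp _ => ?_)
      (fun p hp => by simpa [eq_comm] using hp) (fun p _ => rfl)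
    · rw [Finset.mem_offDiag] at hp
      simp [f, c.anticomm _ _ hp.2.2, mul_comm (a p.1)]
    · exact fun h => (Finset.mem_offDiag.1 hp).2.2 (congrArg Prod.snd h)
  calc (∑ i, a i • c.E i) * (∑ i, a i • c.E i) = ∑ p ∈ Finset.univ ×ˢ Finset.univ, f p := by
        simp only [Finset.sum_mul_sum, smul_mul_smul_comm, Finset.sum_product, f]
    _ = -(∑ i, a i ^ 2) • 1 := by
        rw [← Finset.diag_union_offDiag, Finset.sum_union (Finset.disjoint_diag_offDiag _),
          hdiag, hoff, add_zero]

def matrix (c : CliffordFamily R m n) (s : Fin (m + 1) → R) : Matrix n n R :=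
  s 0 • 1 + ∑ i, s i.succ • c.E i

theorem matrix_neg (c : CliffordFamily R m n) (s : Fin (m + 1) → R) :
    c.matrix (-s) = -c.matrix s := by
  simp only [matrix, Pi.neg_apply, neg_smul, Finset.sum_neg_distrib, neg_add]

theorem transpose_matrix_mul_self (c : CliffordFamily R m n) (s : Fin (m + 1) → R) :
    (c.matrix s)ᵀ * c.matrix s = (∑ i, s i ^ 2) • 1 := by
  have hcomm : Commute (s 0 • 1 : Matrix n n R) (∑ i, s i.succ • c.E i) :=
    (Commute.one_left _).smul_left _
  have htr : (c.matrix s)ᵀ = s 0 • 1 - ∑ i, s i.succ • c.E i := by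
    simp [matrix, transpose_sum, c.transpose, sub_eq_add_neg]
  rw [htr, matrix, ← hcomm.mul_self_sub_mul_self_eq', sum_smul_mul_self, Fin.sum_univ_succ]
  simp [sq, add_smul, smul_smul]

theorem matrix_mem_unitaryGroup {d : ℕ} (c : CliffordFamily ℝ m (Fin d)) (s : Sph (m + 1)) :
    c.matrix (s : Euc (m + 1)) ∈ unitaryGroup (Fin d) ℝ := by
  rw [mem_unitaryGroup_iff', star_eq_conjTranspose, conjTranspose_eq_transpose_of_trivial,
    transpose_matrix_mul_self, ← EuclideanSpace.real_norm_sq_eq]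
  simp

section Isometry

variable {d : ℕ} (c : CliffordFamily ℝ m (Fin d))

noncomputable def sphereIsometry (s : Sph (m + 1)) : Euc d ≃ₗᵢ[ℝ] Euc d :=
  Unitary.linearIsometryEquiv
    ⟨toEuclideanCLM (n := Fin d) (𝕜 := ℝ) (c.matrix (s : Euc (m + 1))),
      Unitary.map_mem _ (c.matrix_mem_unitaryGroup s)⟩

theorem sphereIsometry_apply (s : Sph (m + 1)) (w : Euc d) :
    c.sphereIsometry s w = WithLp.toLp 2 (c.matrix (s : Euc (m + 1)) *ᵥ w) :=
  rfl

theorem sphereIsometry_neg_neg (s : Sph (m + 1)) (w : Euc d) :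
    c.sphereIsometry (-s) (-w) = c.sphereIsometry s w := by
  simp [sphereIsometry_apply, matrix_neg, neg_mulVec, mulVec_neg]

theorem continuous_sphereIsometry :
    Continuous fun p : Sph (m + 1) × Euc d => c.sphereIsometry p.1 p.2 := by
  simp only [sphereIsometry_apply, matrix]
  fun_prop

end Isometry

end CliffordFamily

section OnePointContinuity

variable {X E : Type*} [TopologicalSpace X] [NormedAddCommGroup E] [ProperSpace E]

theorem OnePoint.continuous_map_of_norm_eq {f : X → E → E} (hf : Continuous (uncurry f))
    (hnorm : ∀ x w, ‖f x w‖ = ‖w‖) :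
    Continuous fun p : X × OnePoint E => OnePoint.map (f p.1) p.2 := by
  refine continuous_iff_continuousAt.2 fun ⟨x, v⟩ => ?_
  induction v using OnePoint.rec with
  | coe w =>
    have hemb : IsOpenEmbedding (Prod.map id ((↑) : E → OnePoint E)) :=
      (IsOpenEmbedding.id (X := X)).prodMap OnePoint.isOpenEmbedding_coe
    have hnhds : 𝓝 ((x, (w : OnePoint E)) : X × OnePoint E) = map (Prod.map id (↑)) (𝓝 (x, w)) :=
      (hemb.map_nhds_eq (x, w)).symm
    rw [ContinuousAt, hnhds, tendsto_map'_iff]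
    exact (OnePoint.continuous_coe.comp hf).continuousAt
  | infty =>
    refine (OnePoint.hasBasis_nhds_infty.tendsto_right_iff).2 fun K ⟨_, hK⟩ => ?_
    obtain ⟨R, hKR⟩ := hK.isBounded.subset_closedBall 0
    have hball : IsClosed (Metric.closedBall (0 : E) R) ∧ IsCompact (Metric.closedBall (0 : E) R) :=
      ⟨Metric.isClosed_closedBall, isCompact_closedBall 0 R⟩
    filter_upwards [prod_mem_nhds univ_mem (OnePoint.hasBasis_nhds_infty.mem_of_mem hball)]
    rintro ⟨y, v⟩ ⟨-, hv⟩
    rcases hv with ⟨w, hw, rfl⟩ | hv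
    · refine Or.inl ⟨f y w, fun hK => hw ?_, rfl⟩
      simpa [hnorm] using hKR hK
    · rw [Set.mem_singleton_iff.1 hv]
      exact Or.inr rfl

end OnePointContinuity

section OnePointSphere

variable {E : Type*} [NormedAddCommGroup E] [InnerProductSpace ℝ E] (n : ℕ)
  [Fact (finrank ℝ E = n + 1)]

noncomputable def onePointHomeoSphere (v : Metric.sphere (0 : E) 1) :
    OnePoint (Euc n) ≃ₜ Metric.sphere (0 : E) 1 :=
  haveI := FiniteDimensional.of_fact_finrank_eq_succ (K := ℝ) (V := E) n
  OnePoint.equivOfIsEmbeddingOfRangeEq v (stereographic' n v).symm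
    ((stereographic' n v).symm.isOpenEmbedding (by simp)).toIsEmbedding
    (by
      ext x
      refine ⟨?_, fun hx =>
        ⟨stereographic' n v x, (stereographic' n v).left_inv (by simpa using hx)⟩⟩
      rintro ⟨w, rfl⟩
      simpa using (stereographic' n v).map_target (x := w) (by simp))

@[simp]
theorem onePointHomeoSphere_infty (v : Metric.sphere (0 : E) 1) :
    onePointHomeoSphere n v ∞ = v := rfl

@[simp]
theorem onePointHomeoSphere_zero (v : Metric.sphere (0 : E) 1) :
    onePointHomeoSphere n v (0 : Euc n) = -v := by
  ext1
  simp [onePointHomeoSphere, stereographic'_symm_apply]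

end OnePointSphere

theorem Quot.mk_eq_mk_iff_of_involutive {α : Type*} {r : α → α → Prop} {f : α → α}
    (hf : Involutive f) (hr : ∀ a b, r a b ↔ b = f a) {a b : α} :
    Quot.mk r a = Quot.mk r b ↔ b = a ∨ b = f a := by
  have hequiv : Equivalence fun a b => b = a ∨ b = f a :=
    ⟨fun _ => .inl rfl,
     by rintro a b (rfl | rfl) <;> simp [hf _],
     by rintro a b c (rfl | rfl) (rfl | rfl) <;> simp [hf _]⟩
  refine ⟨fun h => hequiv.eqvGen_iff.1 ((Quot.eqvGen_exact h).mono fun a b hab => ?_), ?_⟩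
  · exact .inr ((hr a b).1 hab)
  · rintro (rfl | rfl)
    · rfl
    · exact Quot.sound ((hr _ _).2 rfl)

theorem projMk_eq_projMk_iff {n : ℕ} {s t : Sph n} : projMk s = projMk t ↔ t = s ∨ t = -s :=
  Quot.mk_eq_mk_iff_of_involutive neg_involutive fun s t =>
    (Subtype.ext_iff (a1 := t) (a2 := -s)).symm

-- `[s] ↦ ⟪s, ·⟫ • s` is a continuous injection into a Hausdorff space.
instance (n : ℕ) : T2Space (RealProj n) := by
  let g : RealProj n → Euc n → Euc n :=
    Quot.lift (fun s x => ⟪(s : Euc n), x⟫ • (s : Euc n)) fun s t (hst : (t : Euc n) = _) => by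
      ext1 x; simp [hst]
  have hg : Continuous g := continuous_quot_lift _ (continuous_pi fun x => by fun_prop)
  refine ⟨fun a b hab => separated_by_continuous hg fun hgab => hab ?_⟩
  induction a using Quot.ind with | _ s => ?_
  induction b using Quot.ind with | _ t => ?_
  have hs : (s : Euc n) = ⟪(t : Euc n), s⟫ • (t : Euc n) := by
    simpa [g, real_inner_self_eq_norm_sq] using congrFun hgab s
  have hc : |⟪(t : Euc n), s⟫| = 1 := by
    simpa [norm_smul] using congrArg norm hs.symm
  refine projMk_eq_projMk_iff.2 ?_
  rcases abs_eq (zero_le_one' ℝ) |>.1 hc with hc | hc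
  · exact .inl (Subtype.ext (by rw [hs, hc, one_smul]))
  · exact .inr (Subtype.ext (by rw [coe_neg_sphere, hs, hc, neg_one_smul, neg_neg]))

namespace BorelProd

variable {n : ℕ} {B Y : Type*} [TopologicalSpace B] {inv : B → B} (F : Sph n → B → Y)
  (hF : ∀ s b, F (-s) (inv b) = F s b)

def lift : BorelProd n inv → RealProj n × Y :=
  Quot.lift (fun p => (projMk p.1, F p.1 p.2)) <| by
    rintro ⟨s, b⟩ ⟨t, c⟩ ⟨hst, hbc⟩
    obtain rfl : t = -s := Subtype.ext hst
    obtain rfl : c = inv b := hbc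
    simp only [hF, Prod.mk.injEq, and_true]
    exact Quot.sound rfl

theorem lift_bijective (hbij : ∀ s, Function.Bijective (F s)) :
    Function.Bijective (lift F hF) := by
  constructor
  · rintro ⟨s, b⟩ ⟨t, c⟩ h
    obtain ⟨hst : projMk s = projMk t, hbc : F s b = F t c⟩ := Prod.mk.inj h
    rcases projMk_eq_projMk_iff.1 hst with rfl | rfl
    · rw [(hbij _).1 hbc]
    · have hcb : c = inv b := (hbij (-s)).1 (by rw [hF]; exact hbc.symm)
      exact Quot.sound ⟨rfl, hcb⟩
  · rintro ⟨⟨s⟩, y⟩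
    obtain ⟨b, rfl⟩ := (hbij s).2 y
    exact ⟨Quot.mk _ (s, b), rfl⟩

variable [TopologicalSpace Y] [CompactSpace B] [T2Space Y]

noncomputable def homeoProd (hbij : ∀ s, Function.Bijective (F s))
    (hcont : Continuous fun p : Sph n × B => F p.1 p.2) :
    BorelProd n inv ≃ₜ RealProj n × Y :=
  Continuous.homeoOfEquivCompactToT2 (f := Equiv.ofBijective _ (lift_bijective F hF hbij))
    (continuous_quot_lift _ (continuous_quot_mk.comp continuous_fst |>.prodMk hcont))

@[simp]
theorem homeoProd_mk (hbij : ∀ s, Function.Bijective (F s))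
    (hcont : Continuous fun p : Sph n × B => F p.1 p.2) (s : Sph n) (b : B) :
    homeoProd F hF hbij hcont (Quot.mk _ (s, b)) = (projMk s, F s b) := rfl

end BorelProd

theorem exists_borelProd_homeo_of_odd_isometry {n d : ℕ} (A : Sph n → Euc d ≃ₗᵢ[ℝ] Euc d)
    (hA : Continuous fun p : Sph n × Euc d => A p.1 p.2) (hodd : ∀ s w, A (-s) (-w) = A s w) :
    ∃ Φ : BorelProd n (opNeg d) ≃ₜ RealProj n × Sph (d + 1),
      (∀ (s : Sph n) (v : OnePoint (Euc d)), (Φ (Quot.mk _ (s, v))).1 = projMk s) ∧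
      ∃ nPt sPt : Sph (d + 1), (sPt : Euc (d + 1)) = -(nPt : Euc (d + 1)) ∧
        (∀ s : Sph n, Φ (Quot.mk _ (s, ((0 : Euc d) : OnePoint (Euc d)))) = (projMk s, nPt)) ∧
        (∀ s : Sph n, Φ (Quot.mk _ (s, (∞ : OnePoint (Euc d)))) = (projMk s, sPt)) := by
  have : Fact (finrank ℝ (Euc (d + 1)) = d + 1) := ⟨finrank_euclideanSpace_fin⟩
  let N := sphPt (d + 1) d.succ_pos
  let σ := onePointHomeoSphere d N
  let F s v := σ ((A s).toHomeomorph.onePointCongr v)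
  have hF : ∀ s v, F (-s) (opNeg d v) = F s v := by
    intro s v
    induction v using OnePoint.rec with
    | infty => rfl
    | coe w => exact congrArg (σ ∘ (↑)) (hodd s w)
  have hcont : Continuous fun p : Sph n × OnePoint (Euc d) => F p.1 p.2 :=
    σ.continuous.comp (OnePoint.continuous_map_of_norm_eq hA fun s => (A s).norm_map)
  refine ⟨BorelProd.homeoProd F hF (fun s => σ.bijective.comp (Homeomorph.bijective _)) hcont,
    fun _ _ => rfl, -N, N, (neg_neg _).symm, fun s => ?_, fun s => ?_⟩ <;>
  simp [F, σ]

/-- For `ℓ ≥ 2` and `j = 2^{φ(ℓ−1)}`, there is a homeomorphism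
`Φ : S(ℓα) ×_{ℤ/2} S^{jα} → ℝP^{ℓ−1} × S^j` over `ℝP^{ℓ−1}` (commuting with the projections
to `ℝP^{ℓ−1}`, the projection of the source being induced by `(s, v) ↦ [s]`) which preserves
the distinguished sections: there are two antipodal points `n, s ∈ S^j` such that `Φ` carries
the class of `(s, 0)` to `([s], n)` and the class of `(s, ∞)` to `([s], s)`. -/
theorem borelProd_onePoint_homeo_trivial (ℓ : ℕ) (hℓ : 2 ≤ ℓ) (j : ℕ)
    (hj : j = 2 ^ adamsPhi (ℓ - 1)) :
    ∃ Φ : BorelProd ℓ (opNeg j) ≃ₜ RealProj ℓ × Sph (j + 1),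
      (∀ (s : Sph ℓ) (v : OnePoint (Euc j)),
        (Φ (Quot.mk _ (s, v))).1 = projMk s) ∧
      ∃ nPt sPt : Sph (j + 1), (sPt : Euc (j + 1)) = -(nPt : Euc (j + 1)) ∧
        (∀ s : Sph ℓ,
          Φ (Quot.mk _ (s, ((0 : Euc j) : OnePoint (Euc j)))) = (projMk s, nPt)) ∧
        (∀ s : Sph ℓ,
          Φ (Quot.mk _ (s, (∞ : OnePoint (Euc j)))) = (projMk s, sPt)) := by
  obtain ⟨m, rfl⟩ : ∃ m, ℓ = m + 1 := ⟨ℓ - 1, by omega⟩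
  rw [Nat.add_sub_cancel] at hj
  subst hj
  let c := (cliffordTower (adamsPhi m)).restrict (le_cliffordGens_adamsPhi m)
  exact exists_borelProd_homeo_of_odd_isometry c.sphereIsometry c.continuous_sphereIsometry
    c.sphereIsometry_neg_neg
end
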